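/- If a strategy σ_i ∈ NSD_i^k(Γ) is minimax dominated with respect to NSD_{-i}^k(Γ) by some strategy σ'_i ∈ Σ_i (possibly already deleted), then σ_i is minimax dominated with respect to NSD_{-i}^k(Γ) by some strategy in NSD_i^k(Γ). Hence the deletion procedure is unchanged if dominating strategies are required to come from the surviving set. -/

import Mathlib

/-!
Pick `σ''` maximising the worst-case payoff `minv` against the opponent profiles surviving
round `k`. It is never deleted in a round `m ≤ k`: were it dominated there by `ρ`, then, since
the opponent set of round `m` contains that of round `k`,
`maxv_m σ'' < minv_m ρ ≤ minv_k ρ ≤ minv_k σ'' ≤ maxv_k σ'' ≤ maxv_m σ''`.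
So `σ''` survives, and `minv_k σ'' ≥ minv_k σ' > maxv_k σ`.
-/

open Function

section
variable {ι : Type*} [DecidableEq ι] {S : ι → Type*}

noncomputable def minv (u : ι → (∀ j, S j) → ℝ) (i : ι) (T : Set (∀ j, S j)) (σ : S i) : ℝ :=
  sInf ((fun τ => u i (Function.update τ i σ)) '' T)

noncomputable def maxv (u : ι → (∀ j, S j) → ℝ) (i : ι) (T : Set (∀ j, S j)) (σ : S i) : ℝ :=
  sSup ((fun τ => u i (Function.update τ i σ)) '' T)

/-- `σ'` minimax dominates `σ` for player `i` w.r.t. opponent profile set `T`. -/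
def MMDomBy (u : ι → (∀ j, S j) → ℝ) (i : ι) (T : Set (∀ j, S j)) (σ σ' : S i) : Prop :=
  minv u i T σ' > maxv u i T σ

def MMDom (u : ι → (∀ j, S j) → ℝ) (i : ι) (T : Set (∀ j, S j)) (σ : S i) : Prop :=
  ∃ σ' : S i, MMDomBy u i T σ σ'

/-- Opponent profiles of player `i` compatible with the product set `Z`. -/
def Opp (Z : ∀ j, Set (S j)) (i : ι) : Set (∀ j, S j) := {τ | ∀ j, j ≠ i → τ j ∈ Z j}

/-- Iterated deletion of minimax dominated strategies. -/
noncomputable def NSD (u : ι → (∀ j, S j) → ℝ) : ℕ → ∀ i, Set (S i)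
  | 0, _ => Set.univ
  | (k+1), i => {σ ∈ NSD u k i | ¬ MMDom u i (Opp (NSD u k) i) σ}

lemma minv_le_maxv {u : ι → (∀ j, S j) → ℝ} {i : ι} {T : Set (∀ j, S j)} (hT : T.Nonempty)
    (hTfin : T.Finite) (σ : S i) : minv u i T σ ≤ maxv u i T σ :=
  csInf_le_csSup (hT.image _) (hTfin.image _).bddBelow (hTfin.image _).bddAbove

lemma minv_anti {u : ι → (∀ j, S j) → ℝ} {i : ι} {T T' : Set (∀ j, S j)} (hT : T.Nonempty)
    (hT'fin : T'.Finite) (hTT' : T ⊆ T') (σ : S i) : minv u i T' σ ≤ minv u i T σ :=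
  csInf_le_csInf (hT'fin.image _).bddBelow (hT.image _) (Set.image_mono hTT')

lemma maxv_mono {u : ι → (∀ j, S j) → ℝ} {i : ι} {T T' : Set (∀ j, S j)} (hT : T.Nonempty)
    (hT'fin : T'.Finite) (hTT' : T ⊆ T') (σ : S i) : maxv u i T σ ≤ maxv u i T' σ :=
  csSup_le_csSup (hT'fin.image _).bddAbove (hT.image _) (Set.image_mono hTT')

lemma not_MMDom_of_forall_minv_le {u : ι → (∀ j, S j) → ℝ} {i : ι} {T T' : Set (∀ j, S j)}
    (hT : T.Nonempty) (hT'fin : T'.Finite) (hTT' : T ⊆ T') {σ : S i}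
    (hmax : ∀ ρ, minv u i T ρ ≤ minv u i T σ) : ¬ MMDom u i T' σ := by
  rintro ⟨ρ, hρ⟩
  refine lt_irrefl _ (calc
    maxv u i T' σ < minv u i T' ρ := hρ
    _ ≤ minv u i T ρ := minv_anti hT hT'fin hTT' ρ
    _ ≤ minv u i T σ := hmax ρ
    _ ≤ maxv u i T σ := minv_le_maxv hT (hT'fin.subset hTT') σ
    _ ≤ maxv u i T' σ := maxv_mono hT hT'fin hTT' σ)

omit [DecidableEq ι] in
lemma Opp_mono {Z Z' : ∀ j, Set (S j)} (h : Z ≤ Z') (i : ι) : Opp Z i ⊆ Opp Z' i :=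
  fun _ hτ j hj => h j (hτ j hj)

omit [DecidableEq ι] in
lemma Opp_nonempty {Z : ∀ j, Set (S j)} (hZ : ∀ j, (Z j).Nonempty) (i : ι) :
    (Opp Z i).Nonempty :=
  ⟨fun j => (hZ j).some, fun j _ => (hZ j).some_mem⟩

lemma NSD_antitone (u : ι → (∀ j, S j) → ℝ) : Antitone (NSD u) :=
  antitone_nat_of_succ_le fun _ _ _ hσ => hσ.1

lemma mem_NSD_iff {u : ι → (∀ j, S j) → ℝ} {n : ℕ} {i : ι} {σ : S i} :
    σ ∈ NSD u n i ↔ ∀ m < n, ¬ MMDom u i (Opp (NSD u m) i) σ := by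
  induction n with
  | zero => simp [NSD]
  | succ n ih =>
    show σ ∈ NSD u n i ∧ _ ↔ _
    rw [ih, Nat.forall_lt_succ_right]

lemma exists_mem_NSD_succ_forall_minv_le [Finite ι] [∀ j, Finite (S j)]
    (u : ι → (∀ j, S j) → ℝ) (k : ℕ) (i : ι) [Nonempty (S i)] (hT : (Opp (NSD u k) i).Nonempty) :
    ∃ σ ∈ NSD u (k + 1) i, ∀ ρ, minv u i (Opp (NSD u k) i) ρ ≤ minv u i (Opp (NSD u k) i) σ := by
  obtain ⟨σ, hmax⟩ := Finite.exists_max (minv u i (Opp (NSD u k) i))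
  refine ⟨σ, mem_NSD_iff.2 fun m hm => ?_, hmax⟩
  exact not_MMDom_of_forall_minv_le hT (Set.toFinite _)
    (Opp_mono (NSD_antitone u (Nat.lt_succ_iff.1 hm)) i) hmax

lemma NSD_nonempty [Finite ι] [∀ j, Finite (S j)] [∀ j, Nonempty (S j)]
    (u : ι → (∀ j, S j) → ℝ) (k : ℕ) (i : ι) : (NSD u k i).Nonempty := by
  induction k generalizing i with
  | zero => exact Set.univ_nonempty
  | succ k ih =>
    obtain ⟨σ, hσ, -⟩ := exists_mem_NSD_succ_forall_minv_le u k i (Opp_nonempty ih i)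
    exact ⟨σ, hσ⟩

variable {ι : Type*} [Fintype ι] [DecidableEq ι] {S : ι → Type*}
  [∀ i, Fintype (S i)] [∀ i, Nonempty (S i)]

theorem dominating_strategy_in_surviving_set_general (u : ι → (∀ j, S j) → ℝ) (i : ι) (k : ℕ)
    (σ : S i) (σ' : S i)
    (hdom : MMDomBy u i (Opp (NSD u k) i) σ σ') :
    ∃ σ'' ∈ NSD u k i, MMDomBy u i (Opp (NSD u k) i) σ σ'' := by
  obtain ⟨σ'', hσ'', hmax⟩ :=
    exists_mem_NSD_succ_forall_minv_le u k i (Opp_nonempty (NSD_nonempty u k) i)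
  exact ⟨σ'', NSD_antitone u k.le_succ i hσ'', hdom.trans_le (hmax σ')⟩

theorem dominating_strategy_in_surviving_set (u : ι → (∀ j, S j) → ℝ) (i : ι) (k : ℕ)
    (σ : S i) (hσ : σ ∈ NSD u k i) (σ' : S i)
    (hdom : MMDomBy u i (Opp (NSD u k) i) σ σ') :
    ∃ σ'' ∈ NSD u k i, MMDomBy u i (Opp (NSD u k) i) σ σ'' :=
  dominating_strategy_in_surviving_set_general u i k σ σ' hdom

end
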